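/- arXiv:2312.01268 — 4 statements merged into one kernel-verified Lean document; each statement's English description precedes it below -/
import Mathlib

section
/- Let ξ be a primitive N-th root of unity in ℂ and let ∂_i denote the i-th face maps of a simplicial complex, satisfying the simplicial identity ∂_i ∂_j = ∂_{j-1} ∂_i for i < j. Define the Mayer differential d = Σ_{i=0}^{n} ξ^i ∂_i on n-chains. Then for r ≤ n, d^r = (∏_{k=1}^{r} (1 + ξ + ... + ξ^{k-1})) · Σ_{j₁ < ... < j_r} ξ^{j₁ + ... + j_r - r(r-1)/2} ∂_{j₁} ⋯ ∂_{j_r}. -/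
/-!
Write `∂_s = ∂_{j₁} ⋯ ∂_{j_r}` for `s = {j₁ < ⋯ < j_r}`. Pushing `∂_i` through `∂_s` with the
simplicial identities gives `∂_i ∂_s = ∂_{s ∪ {e}}`, where `e` is the `i`-th element of `ℕ \ s`,
i.e. `i = e - #{x ∈ s | x < e}`. So in `d (Σ_{#s = r} ξ^{Σ s - r(r-1)/2} ∂_s)` every `(r+1)`-set `t`
arises once from each `e ∈ t`; if `e` is the `k`-th smallest element of `t`, its weight is
`ξ^{Σ t - (r+1)r/2} ξ^{r-k}`, and summing over `k = 0, …, r` produces the factor `1 + ξ + ⋯ + ξ^r`.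
The formula follows by induction on `r`.
-/

open Finset

theorem sum_card_filter_lt {α β : Type*} [LinearOrder α] [AddCommMonoid β] (s : Finset α)
    (g : ℕ → β) : ∑ e ∈ s, g #{x ∈ s | x < e} = ∑ k ∈ range #s, g k := by
  induction s using Finset.induction_on_max with
  | empty => simp
  | insert a s has ih =>
    have ha : a ∉ s := fun h => lt_irrefl a (has a h)
    have hbelow : {x ∈ insert a s | x < a} = s := by
      ext x
      simp only [mem_filter, mem_insert]
      grind
    rw [sum_insert ha, card_insert_of_notMem ha, sum_range_succ, add_comm, hbelow, ← ih]
    congr 1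
    refine sum_congr rfl fun e he => ?_
    rw [filter_insert, if_neg (not_lt.2 (has e he).le)]

theorem card_filter_lt_le (s : Finset ℕ) (e : ℕ) : #{x ∈ s | x < e} ≤ e := by
  simpa using card_le_card (show {x ∈ s | x < e} ⊆ range e from fun x hx => by simp_all)

theorem sum_range_card_le_sum (s : Finset ℕ) : ∑ k ∈ range #s, k ≤ ∑ x ∈ s, x := by
  rw [← sum_card_filter_lt s (fun k => k)]
  exact sum_le_sum fun e _ => card_filter_lt_le s e

/-- `e ↦ e - #{x ∈ s | x < e}` is the rank of `e` in `range m \ s`. -/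
theorem sum_range_eq_sum_sdiff {β : Type*} [AddCommMonoid β] {m : ℕ} {s : Finset ℕ}
    (hs : s ⊆ range m) (g : ℕ → β) :
    ∑ i ∈ range (m - #s), g i = ∑ e ∈ range m \ s, g (e - #{x ∈ s | x < e}) := by
  have hrank : ∀ e ∈ range m \ s, #{x ∈ range m \ s | x < e} = e - #{x ∈ s | x < e} := by
    intro e he
    have hbelow : {x ∈ range m \ s | x < e} = range e \ {x ∈ s | x < e} := by
      ext x
      simp only [mem_filter, mem_sdiff, mem_range] at he ⊢
      grind
    rw [hbelow, card_sdiff_of_subset (fun x hx => by simp_all), card_range]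
  rw [show m - #s = #(range m \ s) by rw [card_sdiff_of_subset hs, card_range],
    ← sum_card_filter_lt]
  exact sum_congr rfl fun e he => by rw [hrank e he]

theorem sum_powersetCard_sum_sdiff {α β : Type*} [DecidableEq α] [AddCommMonoid β]
    (u : Finset α) (r : ℕ) (G : Finset α → α → β) :
    ∑ s ∈ powersetCard r u, ∑ e ∈ u \ s, G s e =
      ∑ t ∈ powersetCard (r + 1) u, ∑ e ∈ t, G (t.erase e) e := by
  rw [sum_sigma', sum_sigma']
  refine sum_nbij' (fun p => ⟨insert p.2 p.1, p.2⟩) (fun q => ⟨q.1.erase q.2, q.2⟩)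
    ?_ ?_ ?_ ?_ ?_
  · rintro ⟨s, e⟩ hp
    simp only [mem_sigma, mem_powersetCard, mem_sdiff] at hp ⊢
    exact ⟨⟨insert_subset hp.2.1 hp.1.1, by rw [card_insert_of_notMem hp.2.2, hp.1.2]⟩,
      mem_insert_self e s⟩
  · rintro ⟨t, e⟩ hq
    simp only [mem_sigma, mem_powersetCard, mem_sdiff] at hq ⊢
    exact ⟨⟨(erase_subset e t).trans hq.1.1, by rw [card_erase_of_mem hq.2, hq.1.2]; rfl⟩,
      hq.1.1 hq.2, notMem_erase e t⟩
  · rintro ⟨s, e⟩ hp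
    simp only [mem_sigma, mem_sdiff] at hp
    simp [erase_insert hp.2.2]
  · rintro ⟨t, e⟩ hq
    simp only [mem_sigma] at hq
    simp [insert_erase hq.2]
  · rintro ⟨s, e⟩ hp
    simp only [mem_sigma, mem_sdiff] at hp
    simp [erase_insert hp.2.2]

theorem sum_pow_sub_card_filter_lt {R : Type*} [CommSemiring R] (ξ : R) {t : Finset ℕ} {r : ℕ}
    (ht : #t = r + 1) : ∑ e ∈ t, ξ ^ (r - #{x ∈ t | x < e}) = ∑ i ∈ range (r + 1), ξ ^ i := by
  rw [sum_card_filter_lt t (fun k => ξ ^ (r - k)), ht, ← sum_range_reflect]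
  exact sum_congr rfl fun k hk => by rw [mem_range] at hk; congr 1; omega

/-- The exponents never truncate: `∑ k ∈ range #s, k ≤ ∑ j ∈ s, j` for every `s`. -/
theorem sub_card_filter_lt_add_sum_erase {t : Finset ℕ} {r e : ℕ} (ht : #t = r + 1) (he : e ∈ t) :
    e - #{x ∈ t.erase e | x < e} + (∑ j ∈ t.erase e, j - ∑ k ∈ range r, k) =
      r - #{x ∈ t | x < e} + (∑ j ∈ t, j - ∑ k ∈ range (r + 1), k) := by
  have hfilter : {x ∈ t.erase e | x < e} = {x ∈ t | x < e} := by
    rw [filter_erase, erase_eq_of_notMem (by simp)]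
  have hsum : ∑ j ∈ t.erase e, j + e = ∑ j ∈ t, j := sum_erase_add _ _ he
  have hlow : ∑ k ∈ range r, k ≤ ∑ j ∈ t.erase e, j := by
    simpa [card_erase_of_mem he, ht] using sum_range_card_le_sum (t.erase e)
  have htotal : ∑ k ∈ range (r + 1), k ≤ ∑ j ∈ t, j := ht ▸ sum_range_card_le_sum t
  have hrank : #{x ∈ t | x < e} ≤ r := by
    rw [← hfilter]
    simpa [card_erase_of_mem he, ht] using card_filter_le (t.erase e) (· < e)
  have hrank_le := card_filter_lt_le t e
  rw [sum_range_succ] at htotal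
  rw [hfilter, sum_range_succ]
  omega

section SortedProd

variable {M : Type*} [Monoid M]

def sortedProd (f : ℕ → M) (s : Finset ℕ) : M :=
  ((s.sort (· ≤ ·)).map f).prod

theorem sortedProd_insert_of_forall_lt (f : ℕ → M) {s : Finset ℕ} {a : ℕ}
    (h : ∀ x ∈ s, a < x) : sortedProd f (insert a s) = f a * sortedProd f s := by
  rw [sortedProd, sort_insert _ (fun x hx => (h x hx).le) (fun ha => lt_irrefl a (h a ha))]
  rfl

theorem face_mul_sortedProd (face : ℕ → M)
    (hface : ∀ i j, i < j → face i * face j = face (j - 1) * face i)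
    {s : Finset ℕ} {e : ℕ} (he : e ∉ s) :
    face (e - #{x ∈ s | x < e}) * sortedProd face s = sortedProd face (insert e s) := by
  induction s using Finset.induction_on_min generalizing e with
  | empty => simp [sortedProd]
  | insert a s has ih =>
    obtain ⟨hea, hes⟩ : e ≠ a ∧ e ∉ s := by simpa using he
    rcases lt_or_gt_of_ne hea with hlt | hgt
    · have hnone : #{x ∈ insert a s | x < e} = 0 := by
        simp only [card_eq_zero, filter_eq_empty_iff, mem_insert, not_lt]
        rintro x (rfl | hx)
        exacts [hlt.le, (hlt.trans (has x hx)).le]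
      have he_lt : ∀ x ∈ insert a s, e < x := by
        simp only [mem_insert, forall_eq_or_imp]
        exact ⟨hlt, fun x hx => hlt.trans (has x hx)⟩
      rw [hnone, Nat.sub_zero, sortedProd_insert_of_forall_lt _ he_lt]
    · set c := #{x ∈ s | x < e}
      have hcount : #{x ∈ insert a s | x < e} = c + 1 := by
        rw [filter_insert, if_pos hgt, card_insert_of_notMem (by simp [(has a).mt (lt_irrefl a)])]
      have hbound : c + 1 ≤ e - a := by
        rw [← hcount, ← Nat.card_Ico]
        refine card_le_card fun x hx => ?_
        simp only [mem_filter, mem_insert, mem_Ico] at hx ⊢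
        grind
      have hswap : face (e - (c + 1)) * face a = face a * face (e - c) := by
        rw [hface a (e - c) (by omega), show e - c - 1 = e - (c + 1) by omega]
      have ha_lt : ∀ x ∈ insert e s, a < x := by
        simp only [mem_insert, forall_eq_or_imp]
        exact ⟨hgt, has⟩
      rw [hcount, sortedProd_insert_of_forall_lt _ has, ← mul_assoc, hswap, mul_assoc, ih hes,
        insert_comm, sortedProd_insert_of_forall_lt _ ha_lt]

end SortedProd

section MayerDifferential

variable {R A : Type*} [CommSemiring R] [Semiring A] [Algebra R A]

def mayerDifferential (ξ : R) (face : ℕ → A) (m : ℕ) : A :=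
  ∑ i ∈ range (m + 1), ξ ^ i • face i

theorem mayerDifferential_mul_sum_powersetCard (ξ : R) (face : ℕ → A)
    (hface : ∀ i j, i < j → face i * face j = face (j - 1) * face i) {n r : ℕ} (hr : r ≤ n) :
    mayerDifferential ξ face (n - r) *
        ∑ s ∈ powersetCard r (range (n + 1)),
          ξ ^ (∑ j ∈ s, j - ∑ k ∈ range r, k) • sortedProd face s =
      (∑ i ∈ range (r + 1), ξ ^ i) •
        ∑ t ∈ powersetCard (r + 1) (range (n + 1)),
          ξ ^ (∑ j ∈ t, j - ∑ k ∈ range (r + 1), k) • sortedProd face t := by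
  calc _ = ∑ s ∈ powersetCard r (range (n + 1)), ∑ i ∈ range (n + 1 - #s),
          ξ ^ (i + (∑ j ∈ s, j - ∑ k ∈ range r, k)) • (face i * sortedProd face s) := by
        rw [mayerDifferential, sum_mul_sum, sum_comm]
        refine sum_congr rfl fun s hs => ?_
        rw [(mem_powersetCard.1 hs).2, show n + 1 - r = n - r + 1 by omega]
        simp only [smul_mul_smul_comm, pow_add]
    _ = ∑ s ∈ powersetCard r (range (n + 1)), ∑ e ∈ range (n + 1) \ s,
          ξ ^ (e - #{x ∈ s | x < e} + (∑ j ∈ s, j - ∑ k ∈ range r, k)) •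
            sortedProd face (insert e s) := by
        refine sum_congr rfl fun s hs => ?_
        rw [sum_range_eq_sum_sdiff (mem_powersetCard.1 hs).1]
        exact sum_congr rfl fun e he => by rw [face_mul_sortedProd face hface (mem_sdiff.1 he).2]
    _ = ∑ t ∈ powersetCard (r + 1) (range (n + 1)),
          (∑ e ∈ t, ξ ^ (e - #{x ∈ t.erase e | x < e} +
            (∑ j ∈ t.erase e, j - ∑ k ∈ range r, k))) • sortedProd face t := by
        rw [sum_powersetCard_sum_sdiff]
        refine sum_congr rfl fun t _ => ?_
        rw [sum_smul]
        exact sum_congr rfl fun e he => by rw [insert_erase he]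
    _ = _ := by
        rw [smul_sum]
        refine sum_congr rfl fun t ht => ?_
        have hcard := (mem_powersetCard.1 ht).2
        rw [sum_congr rfl fun e he => by rw [sub_card_filter_lt_add_sum_erase hcard he, pow_add],
          ← sum_mul, sum_pow_sub_card_filter_lt ξ hcard, mul_smul]

theorem prod_mayerDifferential (ξ : R) (face : ℕ → A)
    (hface : ∀ i j, i < j → face i * face j = face (j - 1) * face i) {n r : ℕ} (hr : r ≤ n) :
    ((List.range r).map (fun t => mayerDifferential ξ face (n - r + 1 + t))).prod =
      (∏ k ∈ range r, ∑ i ∈ range (k + 1), ξ ^ i) •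
        ∑ s ∈ powersetCard r (range (n + 1)),
          ξ ^ (∑ j ∈ s, j - ∑ k ∈ range r, k) • sortedProd face s := by
  induction r with
  | zero => simp [sortedProd]
  | succ r ih =>
    have hr' : r ≤ n := by omega
    have hshift : ∀ t, n - (r + 1) + 1 + (t + 1) = n - r + 1 + t := fun t => by omega
    rw [List.prod_range_succ']
    simp only [hshift]
    rw [Nat.add_zero, show n - (r + 1) + 1 = n - r by omega, ih hr', mul_smul_comm,
      mayerDifferential_mul_sum_powersetCard ξ face hface hr', smul_smul, prod_range_succ]

end MayerDifferential

theorem mayer_differential_power_formula_general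
    (ξ : ℂ)
    {V : Type*} [AddCommGroup V] [Module ℂ V]
    (face : ℕ → Module.End ℂ V)
    (hface : ∀ i j : ℕ, i < j → face i * face j = face (j - 1) * face i)
    (D : ℕ → Module.End ℂ V)
    (hD : ∀ m : ℕ, D m = ∑ i ∈ Finset.range (m + 1), ξ ^ i • face i)
    (n r : ℕ) (hr : r ≤ n) :
    ((List.range r).map (fun t => D (n - r + 1 + t))).prod =
      (∏ k ∈ Finset.range r, ∑ i ∈ Finset.range (k + 1), ξ ^ i) •
        ∑ s ∈ Finset.powersetCard r (Finset.range (n + 1)),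
          ξ ^ ((∑ j ∈ s, j) - r * (r - 1) / 2) • ((s.sort (· ≤ ·)).map face).prod := by
  obtain rfl : D = mayerDifferential ξ face := funext hD
  rw [← sum_range_id]
  exact prod_mayerDifferential ξ face hface hr

/-- For face operators `face i` satisfying the simplicial identity
`face i ∘ face j = face (j-1) ∘ face i` for `i < j`, and the Mayer differential
`D m = ∑_{i=0}^{m} ξ^i face i` on `m`-chains (`ξ = e^{2πi/N}`), the `r`-fold composite
`d^r = D (n-r+1) ∘ ⋯ ∘ D n` on `n`-chains (with `r ≤ n`) equals
`(∏_{k=1}^{r} (1+ξ+⋯+ξ^{k-1})) · ∑_{j₁<⋯<j_r ≤ n} ξ^{j₁+⋯+j_r - r(r-1)/2} face_{j₁}⋯face_{j_r}`. -/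
theorem mayer_differential_power_formula
    (N : ℕ) (hN : 2 ≤ N) (ξ : ℂ) (hξ : ξ = Complex.exp (2 * Real.pi * Complex.I / N))
    {V : Type*} [AddCommGroup V] [Module ℂ V]
    (face : ℕ → Module.End ℂ V)
    (hface : ∀ i j : ℕ, i < j → face i * face j = face (j - 1) * face i)
    (D : ℕ → Module.End ℂ V)
    (hD : ∀ m : ℕ, D m = ∑ i ∈ Finset.range (m + 1), ξ ^ i • face i)
    (n r : ℕ) (hr : r ≤ n) :
    ((List.range r).map (fun t => D (n - r + 1 + t))).prod =
      (∏ k ∈ Finset.range r, ∑ i ∈ Finset.range (k + 1), ξ ^ i) •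
        ∑ s ∈ Finset.powersetCard r (Finset.range (n + 1)),
          ξ ^ ((∑ j ∈ s, j) - r * (r - 1) / 2) • ((s.sort (· ≤ ·)).map face).prod :=
  mayer_differential_power_formula_general ξ face hface D hD n r hr
end

section
/- Let (C_*, d) be an N-chain complex of finite-dimensional complex inner product spaces and 1 ≤ q ≤ N−1. Then the kernel of the Mayer Laplacian Δ_{n,q} = (d^q)* d^q + d^{N-q} (d^{N-q})* equals ker(d^q : C_n → C_{n-q}) ∩ ker((d^{N-q})* : C_n → C_{n+N-q}); consequently dim ker Δ_{n,q} = dim H_{n,q}, where H_{n,q} = ker(d^q)/im(d^{N-q}) is the Mayer homology. -/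
open Module
open scoped InnerProductSpace

lemma ker_adjoint_eq_orthogonal_range {V : Type*} [NormedAddCommGroup V]
    [InnerProductSpace ℂ V] [FiniteDimensional ℂ V] (A : V →ₗ[ℂ] V) :
    LinearMap.ker (LinearMap.adjoint A) = (LinearMap.range A)ᗮ := by
  ext x
  simp only [LinearMap.mem_ker, Submodule.mem_orthogonal]
  constructor
  · rintro h u ⟨y, rfl⟩
    rw [← LinearMap.adjoint_inner_right, h, inner_zero_right]
  · intro h
    rw [← inner_self_eq_zero (𝕜 := ℂ), LinearMap.adjoint_inner_right]
    exact h _ ⟨_, rfl⟩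

/-- Hodge theorem for Mayer Laplacians: the kernel of
`Δ_{n,q} = (d^q)* d^q + d^{N-q} (d^{N-q})*` equals `ker(d^q) ∩ ker((d^{N-q})*)`, and its
dimension equals that of the Mayer homology `H_{n,q} = ker(d^q)/im(d^{N-q})`. -/
theorem mayer_laplacian_kernel_eq_homology {V : Type*} [NormedAddCommGroup V]
    [InnerProductSpace ℂ V] [FiniteDimensional ℂ V]
    (N : ℕ) (hN : 2 ≤ N) (d : V →ₗ[ℂ] V) (hd : d ^ N = 0)
    (q : ℕ) (hq1 : 1 ≤ q) (hq2 : q ≤ N - 1)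
    (Δ : V →ₗ[ℂ] V)
    (hΔ : Δ = LinearMap.adjoint (d ^ q) ∘ₗ (d ^ q) +
        (d ^ (N - q)) ∘ₗ LinearMap.adjoint (d ^ (N - q))) :
    LinearMap.ker Δ =
        LinearMap.ker (d ^ q) ⊓ LinearMap.ker (LinearMap.adjoint (d ^ (N - q))) ∧
      finrank ℂ ↥(LinearMap.ker Δ) =
        finrank ℂ
          (↥(LinearMap.ker (d ^ q)) ⧸
            Submodule.comap (LinearMap.ker (d ^ q)).subtype
              (LinearMap.range (d ^ (N - q)))) := by
  set A := d ^ q with hA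
  set B := d ^ (N - q) with hB
  -- range B ≤ ker A
  have hcomp : A ∘ₗ B = 0 := by
    rw [hA, hB, ← Module.End.mul_eq_comp, ← pow_add, Nat.add_sub_cancel' (le_trans hq2 (Nat.sub_le N 1)), hd]
  have hrk : LinearMap.range B ≤ LinearMap.ker A := by
    rintro x ⟨y, rfl⟩
    have : (A ∘ₗ B) y = 0 := by rw [hcomp]; rfl
    exact this
  -- kernel equality
  have hker : LinearMap.ker Δ =
      LinearMap.ker A ⊓ LinearMap.ker (LinearMap.adjoint B) := by
    ext x
    simp only [LinearMap.mem_ker, Submodule.mem_inf]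
    constructor
    · intro hx
      have h0 : (0 : ℂ) = ⟪Δ x, x⟫_ℂ := by rw [hx, inner_zero_left]
      rw [hΔ] at h0
      simp only [LinearMap.add_apply, LinearMap.comp_apply, inner_add_left,
        LinearMap.adjoint_inner_left] at h0
      rw [← LinearMap.adjoint_inner_right B] at h0
      have h0' : (0 : ℂ) = (‖A x‖ : ℂ) ^ 2 + (‖LinearMap.adjoint B x‖ : ℂ) ^ 2 := by
        rw [h0, inner_self_eq_norm_sq_to_K, inner_self_eq_norm_sq_to_K]
        norm_cast
      have hre : (0 : ℝ) = ‖A x‖ ^ 2 + ‖LinearMap.adjoint B x‖ ^ 2 := by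
        have := congrArg Complex.re h0'
        simpa [← Complex.ofReal_pow] using this
      constructor
      · have : ‖A x‖ = 0 := by nlinarith [sq_nonneg ‖A x‖, sq_nonneg ‖LinearMap.adjoint B x‖, norm_nonneg (A x), norm_nonneg (LinearMap.adjoint B x)]
        simpa using norm_eq_zero.mp this
      · have : ‖LinearMap.adjoint B x‖ = 0 := by nlinarith [sq_nonneg ‖A x‖, sq_nonneg ‖LinearMap.adjoint B x‖, norm_nonneg (A x), norm_nonneg (LinearMap.adjoint B x)]
        simpa using norm_eq_zero.mp this
    · rintro ⟨h1, h2⟩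
      rw [hΔ]
      simp only [LinearMap.add_apply, LinearMap.comp_apply, h1, h2, map_zero, add_zero]
  refine ⟨hker, ?_⟩
  -- dimension count
  have hq : finrank ℂ (↥(LinearMap.ker A) ⧸
      Submodule.comap (LinearMap.ker A).subtype (LinearMap.range B)) =
      finrank ℂ (LinearMap.ker A) - finrank ℂ (LinearMap.range B) := by
    have h1 := Submodule.finrank_quotient_add_finrank
      (Submodule.comap (LinearMap.ker A).subtype (LinearMap.range B))
    have h2 : finrank ℂ (Submodule.comap (LinearMap.ker A).subtype (LinearMap.range B)) =
        finrank ℂ (LinearMap.range B) :=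
      (Submodule.comapSubtypeEquivOfLe hrk).finrank_eq
    omega
  have h3 : finrank ℂ (LinearMap.range B) +
      finrank ℂ ((LinearMap.range B)ᗮ ⊓ LinearMap.ker A : Submodule ℂ V) =
      finrank ℂ (LinearMap.ker A) :=
    Submodule.finrank_add_inf_finrank_orthogonal hrk
  rw [hker, ker_adjoint_eq_orthogonal_range, hq, inf_comm]
  omega
end

section
/- Let (C_*, d) be an N-chain complex of finite-dimensional complex inner product spaces with 1 ≤ q ≤ N−1. Then C_n admits an orthogonal-type direct sum decomposition C_n ≅ ker Δ_{n,q} ⊕ im(d^{N-q}|_{C_{n+N-q}}) ⊕ im((d^q)*|_{C_{n-q}}), i.e., dim C_n = β_{n,q} + rank(d^{N-q} : C_{n+N-q} → C_n) + rank(d^q : C_n → C_{n-q}). -/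
/-!
With `A = d^q` and `B = d^(N-q)` we have `Δ = A* A + B B*` and `re ⟪Δ x, x⟫ = ‖A x‖² + ‖B* x‖²`,
so `ker Δ = ker B* ⊓ ker A = (range B ⊔ range A*)ᗮ`. Since `A B = d^N = 0`, `range B` lies in
`ker A = (range A*)ᗮ`, so that sum is direct, and `rank A* = rank A` finishes the count.
-/

open Module

section

open LinearMap Submodule

variable {𝕜 E F G : Type*} [RCLike 𝕜]
  [NormedAddCommGroup E] [InnerProductSpace 𝕜 E] [FiniteDimensional 𝕜 E]
  [NormedAddCommGroup F] [InnerProductSpace 𝕜 F] [FiniteDimensional 𝕜 F]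
  [NormedAddCommGroup G] [InnerProductSpace 𝕜 G]

lemma disjoint_range_range_adjoint {A : E →ₗ[𝕜] F} {B : G →ₗ[𝕜] E} (hAB : A ∘ₗ B = 0) :
    Disjoint (range B) (range A.adjoint) := by
  rw [← orthogonal_ker]
  exact (orthogonal_disjoint _).mono_left (range_le_ker_iff.mpr hAB)

variable [FiniteDimensional 𝕜 G]

noncomputable def hodgeLaplacian (A : E →ₗ[𝕜] F) (B : G →ₗ[𝕜] E) : E →ₗ[𝕜] E :=
  A.adjoint ∘ₗ A + B ∘ₗ B.adjoint

lemma re_inner_hodgeLaplacian_self (A : E →ₗ[𝕜] F) (B : G →ₗ[𝕜] E) (x : E) :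
    RCLike.re (inner 𝕜 (hodgeLaplacian A B x) x) = ‖A x‖ ^ 2 + ‖B.adjoint x‖ ^ 2 := by
  rw [hodgeLaplacian, LinearMap.add_apply, inner_add_left, comp_apply, comp_apply,
    adjoint_inner_left, ← adjoint_inner_right B, map_add, inner_self_eq_norm_sq,
    inner_self_eq_norm_sq]

lemma ker_hodgeLaplacian (A : E →ₗ[𝕜] F) (B : G →ₗ[𝕜] E) :
    ker (hodgeLaplacian A B) = (range B ⊔ range A.adjoint)ᗮ := by
  have hker : ker (hodgeLaplacian A B) = ker B.adjoint ⊓ ker A := by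
    refine le_antisymm (fun x hx => ?_) (fun x ⟨hB, hA⟩ => ?_)
    · have hsq := re_inner_hodgeLaplacian_self A B x
      rw [mem_ker.mp hx, inner_zero_left, map_zero, eq_comm,
        add_eq_zero_iff_of_nonneg (by positivity) (by positivity)] at hsq
      simp only [sq_eq_zero_iff, norm_eq_zero] at hsq
      exact ⟨hsq.2, hsq.1⟩
    · simp [hodgeLaplacian, mem_ker.mp hA, mem_ker.mp hB]
  rw [hker, ← inf_orthogonal, orthogonal_range, ← orthogonal_ker, orthogonal_orthogonal]

lemma ker_hodgeLaplacian_sup_range_sup_range_adjoint (A : E →ₗ[𝕜] F) (B : G →ₗ[𝕜] E) :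
    ker (hodgeLaplacian A B) ⊔ range B ⊔ range A.adjoint = ⊤ := by
  rw [sup_assoc, ker_hodgeLaplacian, sup_comm]
  exact sup_orthogonal_of_hasOrthogonalProjection

lemma finrank_eq_finrank_ker_hodgeLaplacian_add {A : E →ₗ[𝕜] F} {B : G →ₗ[𝕜] E}
    (hAB : A ∘ₗ B = 0) :
    finrank 𝕜 E = finrank 𝕜 (ker (hodgeLaplacian A B)) + finrank 𝕜 (range B) +
      finrank 𝕜 (range A) := by
  have hsup := finrank_sup_add_finrank_inf_eq (range B) (range A.adjoint)
  rw [(disjoint_range_range_adjoint hAB).eq_bot, finrank_bot, finrank_range_adjoint] at hsup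
  rw [← (range B ⊔ range A.adjoint).finrank_add_finrank_orthogonal, ker_hodgeLaplacian]
  omega

end

theorem mayer_hodge_decomposition_general {V : Type*} [NormedAddCommGroup V]
    [InnerProductSpace ℂ V] [FiniteDimensional ℂ V]
    (N : ℕ) (d : V →ₗ[ℂ] V) (hd : d ^ N = 0)
    (q : ℕ) (hq2 : q ≤ N - 1)
    (Δ : V →ₗ[ℂ] V)
    (hΔ : Δ = LinearMap.adjoint (d ^ q) ∘ₗ (d ^ q) +
        (d ^ (N - q)) ∘ₗ LinearMap.adjoint (d ^ (N - q))) :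
    (LinearMap.ker Δ ⊔ LinearMap.range (d ^ (N - q)) ⊔
        LinearMap.range (LinearMap.adjoint (d ^ q)) = ⊤) ∧
      finrank ℂ ↥(LinearMap.range (d ^ q)) =
        finrank ℂ ↥(LinearMap.range (LinearMap.adjoint (d ^ q))) ∧
      finrank ℂ V =
        finrank ℂ ↥(LinearMap.ker Δ) + finrank ℂ ↥(LinearMap.range (d ^ (N - q))) +
          finrank ℂ ↥(LinearMap.range (d ^ q)) := by
  obtain rfl : Δ = hodgeLaplacian (d ^ q) (d ^ (N - q)) := hΔ
  have hcomp : (d ^ q) ∘ₗ (d ^ (N - q)) = 0 := by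
    rw [← Module.End.mul_eq_comp, ← pow_add, Nat.add_sub_cancel' (hq2.trans (N.sub_le 1)), hd]
  exact ⟨ker_hodgeLaplacian_sup_range_sup_range_adjoint _ _, (LinearMap.finrank_range_adjoint _).symm,
    finrank_eq_finrank_ker_hodgeLaplacian_add hcomp⟩

/-- Hodge-type decomposition for Mayer Laplacians:
`C_n ≅ ker Δ_{n,q} ⊕ im(d^{N-q}) ⊕ im((d^q)*)`, i.e. the three subspaces together span the
whole space and `dim C_n = β_{n,q} + rank(d^{N-q}) + rank(d^q)`
(where `rank(d^q) = rank((d^q)*)`). -/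
theorem mayer_hodge_decomposition {V : Type*} [NormedAddCommGroup V]
    [InnerProductSpace ℂ V] [FiniteDimensional ℂ V]
    (N : ℕ) (hN : 2 ≤ N) (d : V →ₗ[ℂ] V) (hd : d ^ N = 0)
    (q : ℕ) (hq1 : 1 ≤ q) (hq2 : q ≤ N - 1)
    (Δ : V →ₗ[ℂ] V)
    (hΔ : Δ = LinearMap.adjoint (d ^ q) ∘ₗ (d ^ q) +
        (d ^ (N - q)) ∘ₗ LinearMap.adjoint (d ^ (N - q))) :
    (LinearMap.ker Δ ⊔ LinearMap.range (d ^ (N - q)) ⊔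
        LinearMap.range (LinearMap.adjoint (d ^ q)) = ⊤) ∧
      finrank ℂ ↥(LinearMap.range (d ^ q)) =
        finrank ℂ ↥(LinearMap.range (LinearMap.adjoint (d ^ q))) ∧
      finrank ℂ V =
        finrank ℂ ↥(LinearMap.ker Δ) + finrank ℂ ↥(LinearMap.range (d ^ (N - q))) +
          finrank ℂ ↥(LinearMap.range (d ^ q)) :=
  mayer_hodge_decomposition_general N d hd q hq2 Δ hΔ
end

section
/- Let A_m be the 3-chain subcomplex of ℤ₃[x] spanned by 1, x, ..., x^{3m+1} with d(x^n) = n x^{n-1}. Then H_{n,1}(A_m) ≅ ℤ₃ if n = 3m and is zero otherwise, and H_{n,2}(A_m) ≅ ℤ₃ if n = 3m+1 and is zero otherwise. -/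
open Polynomial Module

/-- The differential `d(x^n) = n·x^{n-1}` on `ℤ₃[x]`: the formal derivative. -/
noncomputable def derivZ3 : Module.End (ZMod 3) (Polynomial (ZMod 3)) :=
  (Polynomial.derivative : Polynomial (ZMod 3) →ₗ[ZMod 3] Polynomial (ZMod 3))

/-- The degree-`n` graded component of the truncated 3-chain complex
`A_m = ℤ₃{1, x, …, x^{3m+1}}`: `ℤ₃·x^n` for `n ≤ 3m+1` and `0` otherwise. -/
noncomputable def truncGraded (m n : ℕ) : Submodule (ZMod 3) (Polynomial (ZMod 3)) :=
  if n ≤ 3 * m + 1 then Submodule.span (ZMod 3) {(Polynomial.X : Polynomial (ZMod 3)) ^ n}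
  else ⊥

/-- Mayer Betti number of `A_m`: `dim ((C_n ⊓ ker d^q) / d^{3-q}(C_{n+3-q}))`. -/
noncomputable def truncMayerBetti (m n q : ℕ) : ℕ :=
  finrank (ZMod 3)
    (↥(truncGraded m n ⊓ LinearMap.ker (derivZ3 ^ q)) ⧸
      Submodule.comap (truncGraded m n ⊓ LinearMap.ker (derivZ3 ^ q)).subtype
        ((truncGraded m (n + (3 - q))).map (derivZ3 ^ (3 - q))))

section Aux

variable {K V : Type*} [Field K] [AddCommGroup V] [Module K V]

lemma aux_quot_le (W S : Submodule K V) (h : W ≤ S) :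
    finrank K (W ⧸ Submodule.comap W.subtype S) = 0 := by
  have ht : Submodule.comap W.subtype S = ⊤ := Submodule.comap_subtype_eq_top.mpr h
  haveI : Subsingleton (W ⧸ Submodule.comap W.subtype S) :=
    Submodule.Quotient.subsingleton_iff.mpr ht
  exact Module.finrank_zero_of_subsingleton

lemma aux_quot_disjoint (W S : Submodule K V) (h : Disjoint W S) :
    finrank K (W ⧸ Submodule.comap W.subtype S) = finrank K W := by
  have hb : Submodule.comap W.subtype S = ⊥ := by
    rw [Submodule.eq_bot_iff]
    rintro ⟨x, hx⟩ hxS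
    exact Subtype.ext (h.le_bot ⟨hx, hxS⟩)
  rw [hb]
  exact (Submodule.quotEquivOfEqBot _ rfl).finrank_eq

lemma aux_finrank_congr {A B : Submodule K V} (h : A = B) :
    finrank K A = finrank K B :=
  (LinearEquiv.ofEq _ _ h).finrank_eq

lemma aux_span_disjoint_ker (f : Module.End K V) (v : V) (h : f v ≠ 0) :
    Disjoint (Submodule.span K {v}) (LinearMap.ker f) := by
  rw [Submodule.disjoint_def]
  intro x hx hk
  obtain ⟨a, rfl⟩ := Submodule.mem_span_singleton.mp hx
  rw [LinearMap.mem_ker, map_smul] at hk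
  rcases eq_or_ne a 0 with rfl | ha
  · simp
  · exact absurd ((smul_eq_zero.mp hk).resolve_left ha) h

lemma aux_span_le_ker (f : Module.End K V) (v : V) (h : f v = 0) :
    Submodule.span K {v} ≤ LinearMap.ker f :=
  Submodule.span_le.mpr (by simp [h])

lemma aux_map_span (f : Module.End K V) (v : V) :
    (Submodule.span K {v}).map f = Submodule.span K {f v} := by
  rw [Submodule.map_span, Set.image_singleton]

end Aux

lemma derivZ3_X_pow (k : ℕ) :
    derivZ3 ((X : Polynomial (ZMod 3)) ^ k) = (k : ZMod 3) • X ^ (k - 1) := by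
  show Polynomial.derivative ((X : Polynomial (ZMod 3)) ^ k) = _
  rw [Polynomial.derivative_X_pow, Polynomial.smul_eq_C_mul]

lemma derivZ3_sq_X_pow (k : ℕ) :
    (derivZ3 ^ 2) ((X : Polynomial (ZMod 3)) ^ k)
      = ((k : ZMod 3) * ((k - 1 : ℕ) : ZMod 3)) • X ^ (k - 2) := by
  have h : (derivZ3 ^ 2) ((X : Polynomial (ZMod 3)) ^ k) = derivZ3 (derivZ3 (X ^ k)) := by
    rw [pow_two, Module.End.mul_apply]
  rw [h, derivZ3_X_pow, map_smul, derivZ3_X_pow, smul_smul, Nat.sub_sub]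

lemma Xpow_ne_zero (k : ℕ) : (X : Polynomial (ZMod 3)) ^ k ≠ 0 :=
  pow_ne_zero _ Polynomial.X_ne_zero

lemma cast_zero_iff (k : ℕ) : ((k : ZMod 3) = 0) ↔ 3 ∣ k :=
  ZMod.natCast_eq_zero_iff k 3

/-- For the truncated 3-chain complex `A_m` spanned by `1, x, …, x^{3m+1}`
with `d(x^n) = n x^{n-1}`, the Mayer homology is `H_{n,1}(A_m) ≅ ℤ₃` exactly for `n = 3m`
(zero otherwise), and `H_{n,2}(A_m) ≅ ℤ₃` exactly for `n = 3m+1` (zero otherwise). -/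
theorem trunc_mayer_homology (m : ℕ) :
    (∀ n : ℕ, truncMayerBetti m n 1 = if n = 3 * m then 1 else 0) ∧
      ∀ n : ℕ, truncMayerBetti m n 2 = if n = 3 * m + 1 then 1 else 0 := by
  have e31 : (3 : ℕ) - 1 = 2 := rfl
  have e32 : (3 : ℕ) - 2 = 1 := rfl
  constructor
  · intro n
    unfold truncMayerBetti
    by_cases h1 : n ≤ 3 * m + 1
    · by_cases h2 : (3 : ℕ) ∣ n
      · -- X^n in kernel of d
        by_cases h3 : n + (3 - 1) ≤ 3 * m + 1
        · -- image is everything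
          rw [if_neg (by omega : ¬ n = 3 * m)]
          apply aux_quot_le
          refine inf_le_left.trans ?_
          simp only [truncGraded, if_pos h1, if_pos h3, e31]
          rw [aux_map_span, derivZ3_sq_X_pow]
          have e1 : ((n + 2 : ℕ) : ZMod 3) = 2 := by
            obtain ⟨c, rfl⟩ := h2; push_cast
            rw [show ((3 : ZMod 3) = 0) by decide]; ring
          have e2 : ((n + 2 - 1 : ℕ) : ZMod 3) = 1 := by
            obtain ⟨c, rfl⟩ := h2
            have h : 3 * c + 2 - 1 = 3 * c + 1 := by omega
            rw [h]; push_cast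
            rw [show ((3 : ZMod 3) = 0) by decide]; ring
          have e3 : n + 2 - 2 = n := by omega
          rw [e1, e2, e3,
            Submodule.span_singleton_smul_eq (Ne.isUnit (by decide : ((2 : ZMod 3) * 1) ≠ 0))]
        · -- image is zero
          rw [if_pos (by omega : n = 3 * m)]
          have hS : (truncGraded m (n + (3 - 1))).map (derivZ3 ^ (3 - 1)) = ⊥ := by
            simp only [truncGraded, if_neg h3, Submodule.map_bot]
          refine (aux_quot_disjoint _ _ (hS ▸ disjoint_bot_right)).trans ?_
          have hker : Submodule.span (ZMod 3) {(X : Polynomial (ZMod 3)) ^ n}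
              ≤ LinearMap.ker (derivZ3 ^ 1) := by
            rw [pow_one]
            apply aux_span_le_ker
            rw [derivZ3_X_pow, (cast_zero_iff n).mpr h2, zero_smul]
          have hW : truncGraded m n ⊓ LinearMap.ker (derivZ3 ^ 1)
              = Submodule.span (ZMod 3) {(X : Polynomial (ZMod 3)) ^ n} := by
            simp only [truncGraded, if_pos h1]
            exact inf_eq_left.mpr hker
          exact (aux_finrank_congr hW).trans (finrank_span_singleton (Xpow_ne_zero n))
      · -- not in kernel : W = ⊥
        rw [if_neg (by omega : ¬ n = 3 * m)]
        apply aux_quot_le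
        have hW : truncGraded m n ⊓ LinearMap.ker (derivZ3 ^ 1) = ⊥ := by
          simp only [truncGraded, if_pos h1, pow_one]
          refine disjoint_iff.mp (aux_span_disjoint_ker _ _ ?_)
          rw [derivZ3_X_pow]
          exact smul_ne_zero (fun h => h2 ((cast_zero_iff n).mp h)) (Xpow_ne_zero _)
        exact hW.le.trans bot_le
    · rw [if_neg (by omega : ¬ n = 3 * m)]
      apply aux_quot_le
      refine inf_le_left.trans ?_
      simp only [truncGraded, if_neg h1]
      exact bot_le
  · intro n
    unfold truncMayerBetti
    by_cases h1 : n ≤ 3 * m + 1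
    · by_cases h2 : (3 : ℕ) ∣ n ∨ ((3 : ℕ) ∣ (n - 1) ∧ 1 ≤ n)
      · -- X^n in kernel of d²
        have hn0 : (n : ZMod 3) * ((n - 1 : ℕ) : ZMod 3) = 0 := by
          rcases h2 with h | ⟨h, _⟩
          · rw [(cast_zero_iff n).mpr h, zero_mul]
          · rw [(cast_zero_iff (n - 1)).mpr h, mul_zero]
        by_cases h3 : n + (3 - 2) ≤ 3 * m + 1
        · rw [if_neg (by omega : ¬ n = 3 * m + 1)]
          apply aux_quot_le
          refine inf_le_left.trans ?_
          simp only [truncGraded, if_pos h1, if_pos h3, e32]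
          rw [pow_one, aux_map_span, derivZ3_X_pow]
          have e3 : n + 1 - 1 = n := by omega
          have e1 : ((n + 1 : ℕ) : ZMod 3) ≠ 0 := by
            rw [Ne, cast_zero_iff]
            rcases h2 with h | ⟨h, h'⟩ <;> omega
          rw [e3, Submodule.span_singleton_smul_eq (Ne.isUnit e1)]
        · rw [if_pos (by omega : n = 3 * m + 1)]
          have hS : (truncGraded m (n + (3 - 2))).map (derivZ3 ^ (3 - 2)) = ⊥ := by
            simp only [truncGraded, if_neg h3, Submodule.map_bot]
          refine (aux_quot_disjoint _ _ (hS ▸ disjoint_bot_right)).trans ?_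
          have hker : Submodule.span (ZMod 3) {(X : Polynomial (ZMod 3)) ^ n}
              ≤ LinearMap.ker (derivZ3 ^ 2) := by
            apply aux_span_le_ker
            rw [derivZ3_sq_X_pow, hn0, zero_smul]
          have hW : truncGraded m n ⊓ LinearMap.ker (derivZ3 ^ 2)
              = Submodule.span (ZMod 3) {(X : Polynomial (ZMod 3)) ^ n} := by
            simp only [truncGraded, if_pos h1]
            exact inf_eq_left.mpr hker
          exact (aux_finrank_congr hW).trans (finrank_span_singleton (Xpow_ne_zero n))
      · -- n ≡ 2 mod 3 : W = ⊥
        push_neg at h2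
        rw [if_neg (fun h => by have := h2.2 (by omega : (3:ℕ) ∣ (n - 1)); omega)]
        apply aux_quot_le
        have hW : truncGraded m n ⊓ LinearMap.ker (derivZ3 ^ 2) = ⊥ := by
          simp only [truncGraded, if_pos h1]
          refine disjoint_iff.mp (aux_span_disjoint_ker _ _ ?_)
          rw [derivZ3_sq_X_pow]
          refine smul_ne_zero (mul_ne_zero ?_ ?_) (Xpow_ne_zero _)
          · rw [Ne, cast_zero_iff]; exact h2.1
          · rw [Ne, cast_zero_iff]
            intro h
            rcases Nat.eq_zero_or_pos n with rfl | hp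
            · exact h2.1 ⟨0, rfl⟩
            · have := h2.2 h; omega
        exact hW.le.trans bot_le
    · rw [if_neg (by omega : ¬ n = 3 * m + 1)]
      apply aux_quot_le
      refine inf_le_left.trans ?_
      simp only [truncGraded, if_neg h1]
      exact bot_le
end
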